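/- arXiv:1410.3056 — 6 statements merged into one kernel-verified Lean document; each statement's English description precedes it below -/
import Mathlib

section
/- Let H : ℝ^d × ℝ → ℝ be C² with everywhere positive definite Hessian and superlinear, and let A : ℝ^d → ℝ be C² with everywhere positive definite Hessian and satisfy A(p') ≥ min_p H(p',p) for all p'. Let π^0(p') be the unique minimizer of p ↦ H(p',p), and for λ ≥ H(p',π^0(p')) let π^+(p',λ) (resp. π^-(p',λ)) be the unique p ≥ π^0(p') (resp. p ≤ π^0(p')) with H(p',p) = λ. For Z = (z', z) ∈ ℝ^d × ℝ, set 𝔊(Z) = sup { p'·z' + p z − λ : H(p',p) = λ ≥ A(p') }. Suppose (p',p,λ) and (q',q,μ) both lie in the constraint set, realize 𝔊(Z), and admit multipliers α, β ∈ [0,1] with z = α ∂_p H(p',p), z' = α ∇_{p'}H(p',p) + (1−α) ∇A(p'), and the analogous equations for (β, q', q). Then λ = μ, p' = q'; if z > 0 then p = q = π^+(p',λ); if z < 0 then p = q = π^-(p',λ); and moreover, setting p̂ = π^+(p',λ) when z ≥ 0 and p̂ = π^-(p',λ) when z ≤ 0, one has 𝔊(Z) = p'·z' + p̂ z − λ together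 with z = α ∂_p H(p',p̂) and z' = α ∇_{p'}H(p',p̂) + (1−α) ∇A(p'). -/
/-!
A `C²` function with positive definite Hessian lies strictly above its tangent planes. Apply
this to `L = α H + (1 - α) A`, whose derivative at `(p', p)` is `(z', z)` by the multiplier
equations. Vertical perturbations of a maximiser give complementary slackness (`α = 1` or
`A p' = λ`), so `L (p', p) = λ`, whereas `L (q', q) ≤ μ` at every feasible point; hence any other
maximiser differs from `(p', p)` at most in the last coordinate, and only when `α = 0`, i.e.
`z = 0`. The sign of `z = α ∂ₚH (p', p)` places `p` on the correct side of the minimiser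
`π⁰ p'` of the convex function `H (p', ·)`.
-/

open scoped RealInnerProductSpace

section SecondOrder

variable {F G : Type*} [NormedAddCommGroup F] [NormedSpace ℝ F] [NormedAddCommGroup G]
  [NormedSpace ℝ G] {f : F → ℝ}

def HasPosDefHessian (f : F → ℝ) : Prop :=
  ∀ x v, v ≠ 0 → 0 < iteratedFDeriv ℝ 2 f x ![v, v]

theorem hasDerivAt_comp_add_smul {g : F → G} (hg : Differentiable ℝ g) (x v : F) (t : ℝ) :
    HasDerivAt (fun s : ℝ => g (x + s • v)) (fderiv ℝ g (x + t • v) v) t := by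
  have hline : HasDerivAt (fun s : ℝ => x + s • v) v t := by
    simpa using ((hasDerivAt_id t).smul_const v).const_add x
  exact (hg _).hasFDerivAt.comp_hasDerivAt t hline

theorem hasDerivAt_fderiv_comp_add_smul (hf : ContDiff ℝ 2 f) (x v : F) (t : ℝ) :
    HasDerivAt (fun s : ℝ => fderiv ℝ f (x + s • v) v)
      (iteratedFDeriv ℝ 2 f (x + t • v) ![v, v]) t := by
  have hf' : Differentiable ℝ (fderiv ℝ f) :=
    (hf.fderiv_right (m := 1) le_rfl).differentiable one_ne_zero
  rw [iteratedFDeriv_two_apply]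
  exact (ContinuousLinearMap.apply ℝ ℝ v).hasFDerivAt.comp_hasDerivAt t
    (hasDerivAt_comp_add_smul hf' x v t)

theorem add_fderiv_sub_lt (hf : ContDiff ℝ 2 f) (hpos : HasPosDefHessian f) {x y : F}
    (hxy : x ≠ y) : f x + fderiv ℝ f x (y - x) < f y := by
  have hf1 : Differentiable ℝ f := hf.differentiable two_ne_zero
  have hmono : StrictMono fun s : ℝ => fderiv ℝ f (x + s • (y - x)) (y - x) :=
    strictMono_of_hasDerivAt_pos (hasDerivAt_fderiv_comp_add_smul hf x (y - x))
      fun _ => hpos _ _ (sub_ne_zero.mpr hxy.symm)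
  obtain ⟨c, hc, hslope⟩ := exists_hasDerivAt_eq_slope (fun s : ℝ => f (x + s • (y - x)))
    _ zero_lt_one ((hf1.comp (by fun_prop)).continuous.continuousOn)
    fun s _ => hasDerivAt_comp_add_smul hf1 x (y - x) s
  have hlt := hmono hc.1
  simp only [zero_smul, add_zero, one_smul, add_sub_cancel, sub_zero, div_one] at hlt hslope
  linarith

theorem add_fderiv_sub_le (hf : ContDiff ℝ 2 f) (hpos : HasPosDefHessian f) (x y : F) :
    f x + fderiv ℝ f x (y - x) ≤ f y := by
  rcases eq_or_ne x y with rfl | hxy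
  · simp
  · exact (add_fderiv_sub_lt hf hpos hxy).le

end SecondOrder

section ProductDomain

variable {E : Type*} [NormedAddCommGroup E] [InnerProductSpace ℝ E] [CompleteSpace E]
  {H : E × ℝ → ℝ}

theorem fderiv_prod_apply_eq_inner_gradient_add_mul_deriv {x : E} {t : ℝ}
    (hH : DifferentiableAt ℝ H (x, t)) (v : E) (s : ℝ) :
    fderiv ℝ H (x, t) (v, s)
      = ⟪gradient (fun y => H (y, t)) x, v⟫ + s * deriv (fun r => H (x, r)) t := by
  have hfst : fderiv ℝ (fun y => H (y, t)) x
      = (fderiv ℝ H (x, t)).comp (ContinuousLinearMap.inl ℝ E ℝ) :=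
    (hH.hasFDerivAt.comp x (hasFDerivAt_prodMk_left x t)).fderiv
  have hsnd : deriv (fun r => H (x, r)) t = fderiv ℝ H (x, t) (0, 1) :=
    (hH.hasFDerivAt.comp t (hasFDerivAt_prodMk_right x t)).hasDerivAt.deriv
  have hsplit : ((v, s) : E × ℝ) = (v, 0) + s • (0, 1) := by simp
  rw [inner_gradient_left, hfst, hsnd, hsplit, map_add, map_smul, smul_eq_mul]
  rfl

theorem add_sub_mul_deriv_lt (hH : ContDiff ℝ 2 H) (hHpos : HasPosDefHessian H)
    (x : E) {t s : ℝ} (hts : t ≠ s) :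
    H (x, t) + (s - t) * deriv (fun r => H (x, r)) t < H (x, s) := by
  have h := add_fderiv_sub_lt hH hHpos (x := (x, t)) (y := (x, s)) (by simpa using hts)
  rwa [Prod.mk_sub_mk, sub_self, fderiv_prod_apply_eq_inner_gradient_add_mul_deriv
    (hH.differentiable two_ne_zero _), inner_zero_right, zero_add] at h

theorem forall_le_of_deriv_eq_zero (hH : ContDiff ℝ 2 H) (hHpos : HasPosDefHessian H)
    {x : E} {t : ℝ} (ht : deriv (fun r => H (x, r)) t = 0)
    (s : ℝ) : H (x, t) ≤ H (x, s) := by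
  rcases eq_or_ne t s with rfl | hts
  · rfl
  · simpa [ht] using (add_sub_mul_deriv_lt hH hHpos x hts).le

theorem le_of_forall_le_of_deriv_nonneg (hH : ContDiff ℝ 2 H) (hHpos : HasPosDefHessian H)
    {x : E} {m t : ℝ} (hm : ∀ r, H (x, m) ≤ H (x, r))
    (ht : 0 ≤ deriv (fun r => H (x, r)) t) : m ≤ t := by
  by_contra! htm
  have h := add_sub_mul_deriv_lt hH hHpos x htm.ne
  nlinarith [hm t]

theorem le_of_forall_le_of_deriv_nonpos (hH : ContDiff ℝ 2 H) (hHpos : HasPosDefHessian H)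
    {x : E} {m t : ℝ} (hm : ∀ r, H (x, m) ≤ H (x, r))
    (ht : deriv (fun r => H (x, r)) t ≤ 0) : t ≤ m := by
  by_contra! hmt
  have h := add_sub_mul_deriv_lt hH hHpos x hmt.ne'
  nlinarith [hm t]

end ProductDomain

section Maximiser

open Filter Topology

variable {E : Type*} [NormedAddCommGroup E] [InnerProductSpace ℝ E] [CompleteSpace E]
  {H : E × ℝ → ℝ} {A : E → ℝ} {p' q' z' : E} {p q lam mu z a : ℝ}

/-- Complementary slackness: if `A p' < λ`, all nearby `(p', r, H (p', r))` are feasible, so `p`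
is critical for `r ↦ r z - H (p', r)`; with `z = a ∂ₚH (p', p)` and `a ≠ 1` this makes `p` a
minimiser of `H (p', ·)`, whence `λ ≤ A p'`. -/
theorem eq_one_or_eq_of_forall_le (hH : ContDiff ℝ 2 H) (hHpos : HasPosDefHessian H)
    (hAbound : (⨅ r, H (p', r)) ≤ A p')
    (hHP : H (p', p) = lam) (hAP : A p' ≤ lam)
    (hmax : ∀ r, A p' ≤ H (p', r) → r * z - H (p', r) ≤ p * z - lam)
    (hz : z = a * deriv (fun r => H (p', r)) p) : a = 1 ∨ A p' = lam := by
  by_contra! ⟨ha, hA⟩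
  have hd : DifferentiableAt ℝ (fun r => H (p', r)) p :=
    (hH.differentiable two_ne_zero).differentiableAt.comp p (by fun_prop)
  have hslack : ∀ᶠ r in 𝓝 p, A p' < H (p', r) :=
    hd.continuousAt.eventually (lt_mem_nhds (show A p' < H (p', p) from hHP ▸ hAP.lt_of_ne hA))
  have hloc : IsLocalMax (fun r => r * z - H (p', r)) p := by
    filter_upwards [hslack] with r hr
    simpa [hHP] using hmax r hr.le
  have hcrit : z - deriv (fun r => H (p', r)) p = 0 :=
    hloc.hasDerivAt_eq_zero ((hasDerivAt_mul_const z).sub hd.hasDerivAt)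
  have hderiv : deriv (fun r => H (p', r)) p = 0 := by
    have h : (1 - a) * deriv (fun r => H (p', r)) p = 0 := by linarith
    exact (mul_eq_zero.mp h).resolve_left (sub_ne_zero.mpr ha.symm)
  have hle : lam ≤ A p' :=
    hHP ▸ (le_ciInf (forall_le_of_deriv_eq_zero hH hHpos hderiv)).trans hAbound
  exact hA (le_antisymm hAP hle)

/-- Strict convexity of `a H + (1 - a) A` around its critical point `(p', p)`: the multiplier
equations say that its derivative there is `(z', z)`. -/
theorem inner_add_mul_sub_lt_of_ne (hH : ContDiff ℝ 2 H) (hHpos : HasPosDefHessian H)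
    (hA : ContDiff ℝ 2 A)
    (hApos : HasPosDefHessian A) (ha0 : 0 ≤ a) (ha1 : a ≤ 1)
    (hz : z = a * deriv (fun r => H (p', r)) p)
    (hz' : z' = a • gradient (fun r => H (r, p)) p' + (1 - a) • gradient A p')
    (hHP : H (p', p) = lam) (hcompl : a = 1 ∨ A p' = lam)
    (hHQ : H (q', q) = mu) (hAQ : A q' ≤ mu) (hne : q' ≠ p' ∨ 0 < a ∧ q ≠ p) :
    ⟪q', z'⟫ + q * z - mu < ⟪p', z'⟫ + p * z - lam := by
  have hD : a * fderiv ℝ H (p', p) ((q', q) - (p', p)) + (1 - a) * fderiv ℝ A p' (q' - p')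
      = ⟪z', q' - p'⟫ + z * (q - p) := by
    rw [Prod.mk_sub_mk, fderiv_prod_apply_eq_inner_gradient_add_mul_deriv
      (hH.differentiable two_ne_zero _), ← inner_gradient_left, hz', hz]
    simp only [inner_add_left, real_inner_smul_left]
    ring
  have hPQ : (p', p) ≠ (q', q) := by
    rcases hne with hne | ⟨-, hne⟩ <;> simp [hne.symm]
  have hgapH := add_fderiv_sub_lt hH hHpos hPQ
  have hgapA := add_fderiv_sub_le hA hApos p' q'
  have hgap : 0 < a * (H (q', q) - H (p', p) - fderiv ℝ H (p', p) ((q', q) - (p', p)))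
      + (1 - a) * (A q' - A p' - fderiv ℝ A p' (q' - p')) := by
    rcases hne with hne | ⟨ha, -⟩
    · have hltA := add_fderiv_sub_lt hA hApos hne.symm
      rcases ha0.eq_or_lt with rfl | ha
      · linarith
      · nlinarith
    · nlinarith
  have hLP : a * H (p', p) + (1 - a) * A p' = lam := by
    rcases hcompl with rfl | hAP
    · simp [hHP]
    · rw [hHP, hAP]; ring
  have hLQ : a * H (q', q) + (1 - a) * A q' ≤ mu := by
    nlinarith
  rw [inner_sub_right, real_inner_comm q', real_inner_comm p'] at hD
  linarith

end Maximiser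

theorem vertex_maximiser_unique_ii_general (d : ℕ)
    (H : EuclideanSpace ℝ (Fin d) × ℝ → ℝ)
    (hC2 : ContDiff ℝ 2 H)
    (hpos : ∀ P v : EuclideanSpace ℝ (Fin d) × ℝ, v ≠ 0 →
      0 < iteratedFDeriv ℝ 2 H P ![v, v])
    (A : EuclideanSpace ℝ (Fin d) → ℝ)
    (hAC2 : ContDiff ℝ 2 A)
    (hApos : ∀ p' v : EuclideanSpace ℝ (Fin d), v ≠ 0 →
      0 < iteratedFDeriv ℝ 2 A p' ![v, v])
    (hAbound : ∀ p' : EuclideanSpace ℝ (Fin d), (⨅ p : ℝ, H (p', p)) ≤ A p')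
    (π0 : EuclideanSpace ℝ (Fin d) → ℝ)
    (hπ0 : ∀ p', (∀ q : ℝ, H (p', π0 p') ≤ H (p', q)) ∧
      ∀ p : ℝ, (∀ q : ℝ, H (p', p) ≤ H (p', q)) → p = π0 p')
    (πp πm : EuclideanSpace ℝ (Fin d) → ℝ → ℝ)
    (hπp : ∀ (p' : EuclideanSpace ℝ (Fin d)) (lam : ℝ), H (p', π0 p') ≤ lam →
      π0 p' ≤ πp p' lam ∧ H (p', πp p' lam) = lam ∧
      ∀ p : ℝ, π0 p' ≤ p → H (p', p) = lam → p = πp p' lam)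
    (hπm : ∀ (p' : EuclideanSpace ℝ (Fin d)) (lam : ℝ), H (p', π0 p') ≤ lam →
      πm p' lam ≤ π0 p' ∧ H (p', πm p' lam) = lam ∧
      ∀ p : ℝ, p ≤ π0 p' → H (p', p) = lam → p = πm p' lam)
    (z' : EuclideanSpace ℝ (Fin d)) (z : ℝ)
    (p' q' : EuclideanSpace ℝ (Fin d)) (p q lam mu : ℝ)
    (hfeasP : H (p', p) = lam ∧ A p' ≤ lam)
    (hfeasQ : H (q', q) = mu ∧ A q' ≤ mu)
    (hvals : ⟪p', z'⟫ + p * z - lam = ⟪q', z'⟫ + q * z - mu)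
    (hmax : IsGreatest {v : ℝ | ∃ (r' : EuclideanSpace ℝ (Fin d)) (r nu : ℝ),
        H (r', r) = nu ∧ A r' ≤ nu ∧ v = ⟪r', z'⟫ + r * z - nu}
      (⟪p', z'⟫ + p * z - lam))
    (a : ℝ) (ha0 : 0 ≤ a) (ha1 : a ≤ 1)
    (heqPz : z = a * deriv (fun r : ℝ => H (p', r)) p)
    (heqPz' : z' = a • gradient (fun r : EuclideanSpace ℝ (Fin d) => H (r, p)) p'
        + (1 - a) • gradient A p') :
    lam = mu ∧ p' = q' ∧
    (0 < z → p = q ∧ p = πp p' lam) ∧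
    (z < 0 → p = q ∧ p = πm p' lam) ∧
    (0 ≤ z →
      (⟪p', z'⟫ + p * z - lam = ⟪p', z'⟫ + πp p' lam * z - lam) ∧
      z = a * deriv (fun r : ℝ => H (p', r)) (πp p' lam) ∧
      z' = a • gradient (fun r : EuclideanSpace ℝ (Fin d) => H (r, πp p' lam)) p'
        + (1 - a) • gradient A p') ∧
    (z ≤ 0 →
      (⟪p', z'⟫ + p * z - lam = ⟪p', z'⟫ + πm p' lam * z - lam) ∧
      z = a * deriv (fun r : ℝ => H (p', r)) (πm p' lam) ∧
      z' = a • gradient (fun r : EuclideanSpace ℝ (Fin d) => H (r, πm p' lam)) p'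
        + (1 - a) • gradient A p') := by
  obtain ⟨hHP, hAP⟩ := hfeasP
  obtain ⟨hHQ, hAQ⟩ := hfeasQ
  have hcompl : a = 1 ∨ A p' = lam := eq_one_or_eq_of_forall_le hC2 hpos (hAbound p') hHP hAP
    (fun r hr => by linarith [hmax.2 ⟨p', r, _, rfl, hr, rfl⟩]) heqPz
  have hlt := fun hne => inner_add_mul_sub_lt_of_ne hC2 hpos hAC2 hApos ha0 ha1 heqPz heqPz'
    hHP hcompl hHQ hAQ hne
  have hq' : q' = p' := by_contra fun h => (hlt (.inl h)).ne' hvals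
  have hq : 0 < a → q = p := fun ha => by_contra fun h => (hlt (.inr ⟨ha, h⟩)).ne' hvals
  have ha_pos : z ≠ 0 → 0 < a := fun hz => ha0.lt_of_ne (by rintro rfl; simp [heqPz] at hz)
  have hmu : lam = mu := by
    rcases ha0.eq_or_lt with rfl | ha
    · subst hq'
      simp only [heqPz, zero_mul, mul_zero, add_zero] at hvals
      linarith
    · rw [← hHP, ← hHQ, hq', hq ha]
  have hmin := (hπ0 p').1
  have hminle : H (p', π0 p') ≤ lam := hHP ▸ hmin p
  have hp_πp : 0 ≤ z → 0 < a → p = πp p' lam := fun hz ha => (hπp p' lam hminle).2.2 p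
    (le_of_forall_le_of_deriv_nonneg hC2 hpos hmin (nonneg_of_mul_nonneg_right (heqPz ▸ hz) ha))
    hHP
  have hp_πm : z ≤ 0 → 0 < a → p = πm p' lam := fun hz ha => (hπm p' lam hminle).2.2 p
    (le_of_forall_le_of_deriv_nonpos hC2 hpos hmin (nonpos_of_mul_nonpos_right (heqPz ▸ hz) ha))
    hHP
  have hmove : ∀ t, (0 = a ∨ p = t) →
      (⟪p', z'⟫ + p * z - lam = ⟪p', z'⟫ + t * z - lam) ∧
      z = a * deriv (fun r => H (p', r)) t ∧
      z' = a • gradient (fun r => H (r, t)) p' + (1 - a) • gradient A p' := by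
    rintro t (rfl | rfl)
    · simp only [zero_mul, zero_smul, sub_zero, one_smul, zero_add] at heqPz heqPz' ⊢
      simp [heqPz, heqPz']
    · exact ⟨rfl, heqPz, heqPz'⟩
  refine ⟨hmu, hq'.symm, fun hz => ⟨(hq (ha_pos hz.ne')).symm, hp_πp hz.le (ha_pos hz.ne')⟩,
    fun hz => ⟨(hq (ha_pos hz.ne)).symm, hp_πm hz.le (ha_pos hz.ne)⟩,
    fun hz => hmove _ (ha0.eq_or_lt.imp_right (hp_πp hz)),
    fun hz => hmove _ (ha0.eq_or_lt.imp_right (hp_πm hz))⟩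

/-- Uniqueness of the maximiser, ii-version: with `π0 p'` the unique
minimizer of `p ↦ H (p', p)` and `π^± p' λ` the unique solutions of `H (p', ·) = λ` above
and below `π0 p'`, if two feasible points `(p', p, λ)` and `(q', q, μ)` both realize the
supremum `𝔊 (z', z)` and admit multipliers `α, β ∈ [0,1]`, then `λ = μ`, `p' = q'`,
`p = q = π^+ p' λ` if `z > 0`, `p = q = π^- p' λ` if `z < 0`, and setting `p̂ = π^+ p' λ`
when `z ≥ 0` (resp. `p̂ = π^- p' λ` when `z ≤ 0`) the supremum is also realized at
`(p', p̂, λ)` with the same multiplier `α`. -/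
theorem vertex_maximiser_unique_ii (d : ℕ)
    (H : EuclideanSpace ℝ (Fin d) × ℝ → ℝ)
    (hC2 : ContDiff ℝ 2 H)
    (hpos : ∀ P v : EuclideanSpace ℝ (Fin d) × ℝ, v ≠ 0 →
      0 < iteratedFDeriv ℝ 2 H P ![v, v])
    (hsup : ∀ M : ℝ, ∃ R : ℝ, ∀ P : EuclideanSpace ℝ (Fin d) × ℝ, R ≤ ‖P‖ → M * ‖P‖ ≤ H P)
    (A : EuclideanSpace ℝ (Fin d) → ℝ)
    (hAC2 : ContDiff ℝ 2 A)
    (hApos : ∀ p' v : EuclideanSpace ℝ (Fin d), v ≠ 0 →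
      0 < iteratedFDeriv ℝ 2 A p' ![v, v])
    (hAbound : ∀ p' : EuclideanSpace ℝ (Fin d), (⨅ p : ℝ, H (p', p)) ≤ A p')
    (π0 : EuclideanSpace ℝ (Fin d) → ℝ)
    (hπ0 : ∀ p', (∀ q : ℝ, H (p', π0 p') ≤ H (p', q)) ∧
      ∀ p : ℝ, (∀ q : ℝ, H (p', p) ≤ H (p', q)) → p = π0 p')
    (πp πm : EuclideanSpace ℝ (Fin d) → ℝ → ℝ)
    (hπp : ∀ (p' : EuclideanSpace ℝ (Fin d)) (lam : ℝ), H (p', π0 p') ≤ lam →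
      π0 p' ≤ πp p' lam ∧ H (p', πp p' lam) = lam ∧
      ∀ p : ℝ, π0 p' ≤ p → H (p', p) = lam → p = πp p' lam)
    (hπm : ∀ (p' : EuclideanSpace ℝ (Fin d)) (lam : ℝ), H (p', π0 p') ≤ lam →
      πm p' lam ≤ π0 p' ∧ H (p', πm p' lam) = lam ∧
      ∀ p : ℝ, p ≤ π0 p' → H (p', p) = lam → p = πm p' lam)
    (z' : EuclideanSpace ℝ (Fin d)) (z : ℝ)
    (p' q' : EuclideanSpace ℝ (Fin d)) (p q lam mu : ℝ)
    (hfeasP : H (p', p) = lam ∧ A p' ≤ lam)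
    (hfeasQ : H (q', q) = mu ∧ A q' ≤ mu)
    (hvals : ⟪p', z'⟫ + p * z - lam = ⟪q', z'⟫ + q * z - mu)
    (hmax : IsGreatest {v : ℝ | ∃ (r' : EuclideanSpace ℝ (Fin d)) (r nu : ℝ),
        H (r', r) = nu ∧ A r' ≤ nu ∧ v = ⟪r', z'⟫ + r * z - nu}
      (⟪p', z'⟫ + p * z - lam))
    (a : ℝ) (ha0 : 0 ≤ a) (ha1 : a ≤ 1)
    (heqPz : z = a * deriv (fun r : ℝ => H (p', r)) p)
    (heqPz' : z' = a • gradient (fun r : EuclideanSpace ℝ (Fin d) => H (r, p)) p'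
        + (1 - a) • gradient A p')
    (b : ℝ) (hb0 : 0 ≤ b) (hb1 : b ≤ 1)
    (heqQz : z = b * deriv (fun r : ℝ => H (q', r)) q)
    (heqQz' : z' = b • gradient (fun r : EuclideanSpace ℝ (Fin d) => H (r, q)) q'
        + (1 - b) • gradient A q') :
    lam = mu ∧ p' = q' ∧
    (0 < z → p = q ∧ p = πp p' lam) ∧
    (z < 0 → p = q ∧ p = πm p' lam) ∧
    (0 ≤ z →
      (⟪p', z'⟫ + p * z - lam = ⟪p', z'⟫ + πp p' lam * z - lam) ∧
      z = a * deriv (fun r : ℝ => H (p', r)) (πp p' lam) ∧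
      z' = a • gradient (fun r : EuclideanSpace ℝ (Fin d) => H (r, πp p' lam)) p'
        + (1 - a) • gradient A p') ∧
    (z ≤ 0 →
      (⟪p', z'⟫ + p * z - lam = ⟪p', z'⟫ + πm p' lam * z - lam) ∧
      z = a * deriv (fun r : ℝ => H (p', r)) (πm p' lam) ∧
      z' = a • gradient (fun r : EuclideanSpace ℝ (Fin d) => H (r, πm p' lam)) p'
        + (1 - a) • gradient A p') :=
  vertex_maximiser_unique_ii_general d H hC2 hpos A hAC2 hApos hAbound π0 hπ0 πp πm hπp hπm z' z p'
    q' p q lam mu hfeasP hfeasQ hvals hmax a ha0 ha1 heqPz heqPz'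
end

section
/- Let H : ℝ^d × ℝ → ℝ be C² with everywhere positive definite Hessian and superlinear, and let A : ℝ^d → ℝ be C² with everywhere positive definite Hessian and satisfy A(p') ≥ min_p H(p',p) for all p'. Then for every Z ∈ ℝ^{d+1}, sup { P·Z − λ : P = (p',p) ∈ ℝ^{d+1}, λ ∈ ℝ, H(p',p) = λ ≥ A(p') } = sup_{P = (p',p) ∈ ℝ^{d+1}} ( P·Z − max(H(p',p), A(p')) ); that is, the constrained supremum equals the Legendre–Fenchel transform of (p',p) ↦ max(H(p',p), A(p')) at Z. -/
open scoped RealInnerProductSpace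

/-- `𝔊` on the diagonal branch: for a smooth uniformly convex superlinear
`H` and smooth uniformly convex `A ≥ min_p H (·, p)`, the constrained supremum
`sup { P·Z − λ : H (p', p) = λ ≥ A p' }` equals the Legendre–Fenchel transform of
`(p', p) ↦ max (H (p', p)) (A p')` at every `Z = (z', z)`. -/
theorem constrained_sup_eq_legendre_fenchel (d : ℕ)
    (H : EuclideanSpace ℝ (Fin d) × ℝ → ℝ)
    (hC2 : ContDiff ℝ 2 H)
    (hpos : ∀ P v : EuclideanSpace ℝ (Fin d) × ℝ, v ≠ 0 →
      0 < iteratedFDeriv ℝ 2 H P ![v, v])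
    (hsup : ∀ M : ℝ, ∃ R : ℝ, ∀ P : EuclideanSpace ℝ (Fin d) × ℝ, R ≤ ‖P‖ → M * ‖P‖ ≤ H P)
    (A : EuclideanSpace ℝ (Fin d) → ℝ)
    (hAC2 : ContDiff ℝ 2 A)
    (hApos : ∀ p' v : EuclideanSpace ℝ (Fin d), v ≠ 0 →
      0 < iteratedFDeriv ℝ 2 A p' ![v, v])
    (hAbound : ∀ p' : EuclideanSpace ℝ (Fin d), (⨅ p : ℝ, H (p', p)) ≤ A p') :
    ∀ (z' : EuclideanSpace ℝ (Fin d)) (z : ℝ),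
      sSup {v : ℝ | ∃ (p' : EuclideanSpace ℝ (Fin d)) (p lam : ℝ),
          H (p', p) = lam ∧ A p' ≤ lam ∧ v = ⟪p', z'⟫ + p * z - lam}
      = sSup {v : ℝ | ∃ (p' : EuclideanSpace ℝ (Fin d)) (p : ℝ),
          v = ⟪p', z'⟫ + p * z - max (H (p', p)) (A p')} := by
  intro z' z
  set S₁ : Set ℝ := {v : ℝ | ∃ (p' : EuclideanSpace ℝ (Fin d)) (p lam : ℝ),
      H (p', p) = lam ∧ A p' ≤ lam ∧ v = ⟪p', z'⟫ + p * z - lam} with hS₁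
  set S₂ : Set ℝ := {v : ℝ | ∃ (p' : EuclideanSpace ℝ (Fin d)) (p : ℝ),
      v = ⟪p', z'⟫ + p * z - max (H (p', p)) (A p')} with hS₂
  have hcont : Continuous H := hC2.continuous
  -- S₁ ⊆ S₂
  have hsub : S₁ ⊆ S₂ := by
    rintro v ⟨p', p, lam, hH, hA, rfl⟩
    exact ⟨p', p, by rw [max_eq_left (hH ▸ hA), hH]⟩
  -- for any p', a, p one can find q ≥ p (resp. q ≤ p) with a ≤ H (p', q)
  have hbig : ∀ (p' : EuclideanSpace ℝ (Fin d)) (a p : ℝ),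
      (∃ q, p ≤ q ∧ a ≤ H (p', q)) ∧ (∃ q, q ≤ p ∧ a ≤ H (p', q)) := by
    intro p' a p
    obtain ⟨R, hR⟩ := hsup (|a| + 1)
    constructor
    · refine ⟨max R (max 1 p), le_max_of_le_right (le_max_right _ _), ?_⟩
      set q := max R (max 1 p)
      have hq1 : (1 : ℝ) ≤ q := le_max_of_le_right (le_max_left _ _)
      have hqn : q ≤ ‖((p', q) : EuclideanSpace ℝ (Fin d) × ℝ)‖ := by
        calc q ≤ |q| := le_abs_self q
        _ ≤ ‖((p', q) : EuclideanSpace ℝ (Fin d) × ℝ)‖ := by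
          simpa using norm_snd_le ((p', q) : EuclideanSpace ℝ (Fin d) × ℝ)
      have hRq : R ≤ ‖((p', q) : EuclideanSpace ℝ (Fin d) × ℝ)‖ :=
        le_trans (le_max_left R (max 1 p)) hqn
      have := hR (p', q) hRq
      have hnorm1 : (1 : ℝ) ≤ ‖((p', q) : EuclideanSpace ℝ (Fin d) × ℝ)‖ := le_trans hq1 hqn
      nlinarith [abs_nonneg a, le_abs_self a]
    · refine ⟨min (-(max R 1)) p, min_le_right _ _, ?_⟩
      set q := min (-(max R 1)) p
      have hq1 : q ≤ -(max R 1) := min_le_left _ _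
      have habs : max R 1 ≤ |q| := by
        have : max R 1 ≤ -q := by linarith
        exact le_trans this (neg_le_abs q)
      have hqn : |q| ≤ ‖((p', q) : EuclideanSpace ℝ (Fin d) × ℝ)‖ := by
        simpa using norm_snd_le ((p', q) : EuclideanSpace ℝ (Fin d) × ℝ)
      have hRq : R ≤ ‖((p', q) : EuclideanSpace ℝ (Fin d) × ℝ)‖ :=
        le_trans (le_trans (le_max_left R 1) habs) hqn
      have := hR (p', q) hRq
      have hnorm1 : (1 : ℝ) ≤ ‖((p', q) : EuclideanSpace ℝ (Fin d) × ℝ)‖ :=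
        le_trans (le_trans (le_max_right R 1) habs) hqn
      nlinarith [abs_nonneg a, le_abs_self a]
  -- S₁ nonempty
  have hne : S₁.Nonempty := by
    obtain ⟨⟨q, _, hq⟩, _⟩ := hbig 0 (A 0) 0
    exact ⟨_, 0, q, H (0, q), rfl, hq, rfl⟩
  -- S₂ bounded above
  have hC : (0:ℝ) ≤ ‖z'‖ + |z| := by positivity
  have hbddS₂ : BddAbove S₂ := by
    set C : ℝ := ‖z'‖ + |z| with hCdef
    obtain ⟨R, hR⟩ := hsup (C + 1)
    set R' : ℝ := max R 0 with hR'def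
    obtain ⟨P₀, hP₀, hmin⟩ := (isCompact_closedBall (0 : EuclideanSpace ℝ (Fin d) × ℝ) R').exists_isMinOn
      ⟨0, by simp [hR'def, le_max_right R 0]⟩ hcont.continuousOn
    refine ⟨max 0 (C * R' - H P₀), ?_⟩
    rintro v ⟨p', p, rfl⟩
    have hip : ⟪p', z'⟫ ≤ ‖p'‖ * ‖z'‖ := real_inner_le_norm p' z'
    have hPn : ‖p'‖ ≤ ‖((p', p) : EuclideanSpace ℝ (Fin d) × ℝ)‖ := by
      simpa using norm_fst_le ((p', p) : EuclideanSpace ℝ (Fin d) × ℝ)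
    have hPn2 : |p| ≤ ‖((p', p) : EuclideanSpace ℝ (Fin d) × ℝ)‖ := by
      simpa using norm_snd_le ((p', p) : EuclideanSpace ℝ (Fin d) × ℝ)
    have hpz : p * z ≤ |p| * |z| := le_trans (le_abs_self _) (by rw [abs_mul])
    have hmax : H (p', p) ≤ max (H (p', p)) (A p') := le_max_left _ _
    have hbound : ⟪p', z'⟫ + p * z ≤ C * ‖((p', p) : EuclideanSpace ℝ (Fin d) × ℝ)‖ := by
      have h1 : ‖p'‖ * ‖z'‖ ≤ ‖((p', p) : EuclideanSpace ℝ (Fin d) × ℝ)‖ * ‖z'‖ :=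
        mul_le_mul_of_nonneg_right hPn (norm_nonneg _)
      have h2 : |p| * |z| ≤ ‖((p', p) : EuclideanSpace ℝ (Fin d) × ℝ)‖ * |z| :=
        mul_le_mul_of_nonneg_right hPn2 (abs_nonneg _)
      rw [hCdef]; ring_nf; nlinarith
    rcases le_or_gt ‖((p', p) : EuclideanSpace ℝ (Fin d) × ℝ)‖ R' with hle | hgt
    · have hm : H P₀ ≤ H (p', p) := hmin (by simpa [Metric.mem_closedBall] using hle)
      have : C * ‖((p', p) : EuclideanSpace ℝ (Fin d) × ℝ)‖ ≤ C * R' :=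
        mul_le_mul_of_nonneg_left hle hC
      have : ⟪p', z'⟫ + p * z - max (H (p', p)) (A p') ≤ C * R' - H P₀ := by linarith
      exact le_trans this (le_max_right _ _)
    · have hRle : R ≤ ‖((p', p) : EuclideanSpace ℝ (Fin d) × ℝ)‖ :=
        le_trans (le_max_left R 0) hgt.le
      have hH := hR (p', p) hRle
      have hnn : (0:ℝ) ≤ ‖((p', p) : EuclideanSpace ℝ (Fin d) × ℝ)‖ := norm_nonneg _
      have : ⟪p', z'⟫ + p * z - max (H (p', p)) (A p') ≤ 0 := by nlinarith
      exact le_trans this (le_max_left _ _)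
  have hbddS₁ : BddAbove S₁ := hbddS₂.mono hsub
  -- domination: every element of S₂ is ≤ some element of S₁
  have hdom : ∀ v ∈ S₂, ∃ w ∈ S₁, v ≤ w := by
    rintro v ⟨p', p, rfl⟩
    rcases le_or_gt (A p') (H (p', p)) with hge | hlt
    · exact ⟨_, ⟨p', p, H (p', p), rfl, hge, rfl⟩, by rw [max_eq_left hge]⟩
    · have hmax : max (H (p', p)) (A p') = A p' := max_eq_right hlt.le
      have hgcont : Continuous fun q : ℝ => H (p', q) :=
        hcont.comp (continuous_const.prodMk continuous_id)
      rcases le_or_gt 0 z with hz | hz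
      · obtain ⟨⟨T, hpT, hT⟩, _⟩ := hbig p' (A p') p
        obtain ⟨q, hq, hHq⟩ := intermediate_value_Icc hpT hgcont.continuousOn
          (Set.mem_Icc.mpr ⟨hlt.le, hT⟩)
        refine ⟨_, ⟨p', q, A p', hHq, le_refl _, rfl⟩, ?_⟩
        rw [hmax]
        have : p * z ≤ q * z := mul_le_mul_of_nonneg_right hq.1 hz
        linarith
      · obtain ⟨_, ⟨T, hTp, hT⟩⟩ := hbig p' (A p') p
        obtain ⟨q, hq, hHq⟩ := intermediate_value_Icc' hTp hgcont.continuousOn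
          (Set.mem_Icc.mpr ⟨hlt.le, hT⟩)
        refine ⟨_, ⟨p', q, A p', hHq, le_refl _, rfl⟩, ?_⟩
        rw [hmax]
        have : p * z ≤ q * z := mul_le_mul_of_nonpos_right hq.2 hz.le
        linarith
  refine le_antisymm (csSup_le_csSup hbddS₂ hne hsub) ?_
  refine csSup_le (hne.mono hsub) fun v hv => ?_
  obtain ⟨w, hw, hvw⟩ := hdom v hv
  exact hvw.trans (le_csSup hbddS₁ hw)
end

section
/- Let H_i, H_j : ℝ^d × ℝ → ℝ be C² with everywhere positive definite Hessian and superlinear, and let A : ℝ^d → ℝ be C² with everywhere positive definite Hessian and satisfy A(p') ≥ max(min_p H_i(p',p), min_p H_j(p',p)) for all p'. For Z = (z', z_i, z_j) ∈ 𝒬 := ℝ^d × [0,+∞) × (−∞,0], set 𝔊(Z) = sup { p'·z' + p_i z_i + p_j z_j − λ : H_i(p',p_i) = H_j(p',p_j) = λ ≥ A(p') }. Then there exists a nondecreasing function g : [0,+∞) → ℝ with g(a)/a → +∞ as a → +∞ such that for all Z = (z',z_i,z_j) ∈ 𝒬, 𝔊(Z) ≥ g(|z'| + z_i − z_j). -/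
open scoped RealInnerProductSpace

private lemma vertexG_ivt_aux (f : ℝ → ℝ) (hf : Continuous f) (t0 c : ℝ) (h0 : f t0 ≤ c)
    (hgrow : ∃ R : ℝ, ∀ t : ℝ, R ≤ t → c ≤ f t) :
    ∃ t : ℝ, t0 ≤ t ∧ f t = c := by
  obtain ⟨R, hR⟩ := hgrow
  have h1 : c ≤ f (max t0 R) := hR _ (le_max_right _ _)
  have := intermediate_value_Icc (le_max_left t0 R) hf.continuousOn
  obtain ⟨t, ht, hteq⟩ := this ⟨h0, h1⟩
  exact ⟨t, ht.1, hteq⟩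

/-- Superlinearity of `𝔊`, ij-version: there is a nondecreasing function
`g : [0,+∞) → ℝ` with `g a / a → +∞` such that `𝔊 (z', z_i, z_j) ≥ g (|z'| + z_i − z_j)`
for all `z_i ≥ 0 ≥ z_j`. -/
theorem vertex_G_superlinear (d : ℕ)
    (Hi Hj : EuclideanSpace ℝ (Fin d) × ℝ → ℝ)
    (hC2i : ContDiff ℝ 2 Hi) (hC2j : ContDiff ℝ 2 Hj)
    (hposi : ∀ P v : EuclideanSpace ℝ (Fin d) × ℝ, v ≠ 0 →
      0 < iteratedFDeriv ℝ 2 Hi P ![v, v])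
    (hposj : ∀ P v : EuclideanSpace ℝ (Fin d) × ℝ, v ≠ 0 →
      0 < iteratedFDeriv ℝ 2 Hj P ![v, v])
    (hsupi : ∀ M : ℝ, ∃ R : ℝ, ∀ P : EuclideanSpace ℝ (Fin d) × ℝ, R ≤ ‖P‖ → M * ‖P‖ ≤ Hi P)
    (hsupj : ∀ M : ℝ, ∃ R : ℝ, ∀ P : EuclideanSpace ℝ (Fin d) × ℝ, R ≤ ‖P‖ → M * ‖P‖ ≤ Hj P)
    (A : EuclideanSpace ℝ (Fin d) → ℝ)
    (hAC2 : ContDiff ℝ 2 A)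
    (hApos : ∀ p' v : EuclideanSpace ℝ (Fin d), v ≠ 0 →
      0 < iteratedFDeriv ℝ 2 A p' ![v, v])
    (hAbound : ∀ p' : EuclideanSpace ℝ (Fin d),
      (⨅ p : ℝ, Hi (p', p)) ≤ A p' ∧ (⨅ p : ℝ, Hj (p', p)) ≤ A p') :
    ∃ g : ℝ → ℝ, MonotoneOn g (Set.Ici (0 : ℝ)) ∧
      Filter.Tendsto (fun a : ℝ => g a / a) Filter.atTop Filter.atTop ∧
      ∀ (z' : EuclideanSpace ℝ (Fin d)) (zi zj : ℝ), 0 ≤ zi → zj ≤ 0 →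
        g (‖z'‖ + zi - zj) ≤
          sSup {v : ℝ | ∃ (q' : EuclideanSpace ℝ (Fin d)) (qi qj mu : ℝ),
            Hi (q', qi) = mu ∧ Hj (q', qj) = mu ∧ A q' ≤ mu ∧
            v = ⟪q', z'⟫ + qi * zi + qj * zj - mu} := by
  classical
  have hci : Continuous Hi := hC2i.continuous
  have hcj : Continuous Hj := hC2j.continuous
  have hcA : Continuous A := hAC2.continuous
  -- Bounds B n on the closed ball of radius n
  have hBex : ∀ n : ℕ, ∃ C : ℝ, ∀ q' : EuclideanSpace ℝ (Fin d), ‖q'‖ ≤ (n : ℝ) →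
      A q' ≤ C ∧ Hi (q', (n : ℝ)) ≤ C ∧ Hj (q', -(n : ℝ)) ≤ C := by
    intro n
    have hcont : ContinuousOn (fun q' : EuclideanSpace ℝ (Fin d) =>
        max (A q') (max (Hi (q', (n : ℝ))) (Hj (q', -(n : ℝ)))))
        (Metric.closedBall 0 (n : ℝ)) := by
      apply Continuous.continuousOn
      fun_prop
    obtain ⟨C, hC⟩ :=
      (isCompact_closedBall (0 : EuclideanSpace ℝ (Fin d)) (n : ℝ)).exists_bound_of_continuousOn
        hcont
    refine ⟨C, fun q' hq => ?_⟩
    have h := hC q' (by simpa [Metric.mem_closedBall, dist_zero_right] using hq)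
    rw [Real.norm_eq_abs] at h
    have h' := le_trans (le_abs_self _) h
    exact ⟨le_trans (le_max_left _ _) h',
      le_trans (le_trans (le_max_left _ _) (le_max_right _ _)) h',
      le_trans (le_trans (le_max_right _ _) (le_max_right _ _)) h'⟩
  choose B hB using hBex
  -- slice existence lemmas via IVT
  obtain ⟨R1i, hR1i⟩ := hsupi 1
  obtain ⟨R1j, hR1j⟩ := hsupj 1
  have sliceI : ∀ (q' : EuclideanSpace ℝ (Fin d)) (t0 c : ℝ), Hi (q', t0) ≤ c →
      ∃ t : ℝ, t0 ≤ t ∧ Hi (q', t) = c := by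
    intro q' t0 c h0
    refine vertexG_ivt_aux (fun t => Hi (q', t)) (by fun_prop) t0 c h0 ⟨max R1i c, fun t ht => ?_⟩
    have hRt : R1i ≤ t := le_trans (le_max_left _ _) ht
    have hct : c ≤ t := le_trans (le_max_right _ _) ht
    have hnorm : t ≤ ‖((q', t) : EuclideanSpace ℝ (Fin d) × ℝ)‖ := by
      rw [Prod.norm_def]
      exact le_trans (le_abs_self t) (le_max_right _ _)
    have := hR1i (q', t) (le_trans hRt hnorm)
    simpa using le_trans hct (le_trans hnorm (by linarith))
  have sliceJ : ∀ (q' : EuclideanSpace ℝ (Fin d)) (t0 c : ℝ), Hj (q', -t0) ≤ c →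
      ∃ t : ℝ, t0 ≤ t ∧ Hj (q', -t) = c := by
    intro q' t0 c h0
    refine vertexG_ivt_aux (fun t => Hj (q', -t)) (by fun_prop) t0 c h0 ⟨max R1j c, fun t ht => ?_⟩
    have hRt : R1j ≤ t := le_trans (le_max_left _ _) ht
    have hct : c ≤ t := le_trans (le_max_right _ _) ht
    have hnorm : t ≤ ‖((q', -t) : EuclideanSpace ℝ (Fin d) × ℝ)‖ := by
      rw [Prod.norm_def]
      exact le_trans (le_trans (le_abs_self t) (abs_neg t).symm.le) (le_max_right _ _)
    have := hR1j (q', -t) (le_trans hRt hnorm)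
    simpa using le_trans hct (le_trans hnorm (by linarith))
  -- feasibility
  have feas : ∀ (z' : EuclideanSpace ℝ (Fin d)) (zi zj : ℝ), 0 ≤ zi → zj ≤ 0 → ∀ n : ℕ,
      ∃ v ∈ {v : ℝ | ∃ (q' : EuclideanSpace ℝ (Fin d)) (qi qj mu : ℝ),
        Hi (q', qi) = mu ∧ Hj (q', qj) = mu ∧ A q' ≤ mu ∧
        v = ⟪q', z'⟫ + qi * zi + qj * zj - mu},
        (n : ℝ) * (‖z'‖ + zi - zj) - B n ≤ v := by
    intro z' zi zj hzi hzj n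
    set q' : EuclideanSpace ℝ (Fin d) :=
      if z' = (0 : EuclideanSpace ℝ (Fin d)) then 0 else ((n : ℝ) / ‖z'‖) • z' with hq'
    have hqball : ‖q'‖ ≤ (n : ℝ) := by
      by_cases h : z' = 0
      · simp [hq', h]
      · have hz : (0 : ℝ) < ‖z'‖ := norm_pos_iff.mpr h
        rw [hq', if_neg h, norm_smul, Real.norm_eq_abs,
          abs_of_nonneg (div_nonneg (Nat.cast_nonneg n) hz.le)]
        rw [div_mul_cancel₀ _ hz.ne']
    have hinner : ⟪q', z'⟫ = (n : ℝ) * ‖z'‖ := by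
      by_cases h : z' = 0
      · simp [hq', h]
      · have hz : (0 : ℝ) < ‖z'‖ := norm_pos_iff.mpr h
        rw [hq', if_neg h, real_inner_smul_left, real_inner_self_eq_norm_sq]
        field_simp
    obtain ⟨hA1, hA2, hA3⟩ := hB n q' hqball
    obtain ⟨qi, hqi, hieq⟩ := sliceI q' (n : ℝ) (B n) hA2
    obtain ⟨t, htn, hjeq⟩ := sliceJ q' (n : ℝ) (B n) hA3
    refine ⟨⟪q', z'⟫ + qi * zi + (-t) * zj - B n, ⟨q', qi, -t, B n, hieq, hjeq, hA1, rfl⟩, ?_⟩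
    have h1 : (n : ℝ) * zi ≤ qi * zi := mul_le_mul_of_nonneg_right hqi hzi
    have h2 : (n : ℝ) * (-zj) ≤ t * (-zj) := mul_le_mul_of_nonneg_right htn (by linarith)
    rw [hinner]
    linarith
  -- the feasible set is bounded above
  have bdd : ∀ (z' : EuclideanSpace ℝ (Fin d)) (zi zj : ℝ), 0 ≤ zi → zj ≤ 0 →
      BddAbove {v : ℝ | ∃ (q' : EuclideanSpace ℝ (Fin d)) (qi qj mu : ℝ),
        Hi (q', qi) = mu ∧ Hj (q', qj) = mu ∧ A q' ≤ mu ∧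
        v = ⟪q', z'⟫ + qi * zi + qj * zj - mu} := by
    intro z' zi zj hzi hzj
    set M : ℝ := ‖z'‖ + zi - zj + 1 with hM
    have hM1 : 1 ≤ M := by have := norm_nonneg z'; simp [hM]; linarith
    obtain ⟨Ri, hRi⟩ := hsupi (2 * M)
    obtain ⟨Rj, hRj⟩ := hsupj (2 * M)
    set R : ℝ := max (max Ri Rj) 0 with hRdef
    have hR0 : (0 : ℝ) ≤ R := le_max_right _ _
    obtain ⟨Ki, hKi⟩ :=
      (isCompact_closedBall (0 : EuclideanSpace ℝ (Fin d) × ℝ) R).exists_bound_of_continuousOn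
        hci.continuousOn
    obtain ⟨Kj, hKj⟩ :=
      (isCompact_closedBall (0 : EuclideanSpace ℝ (Fin d) × ℝ) R).exists_bound_of_continuousOn
        hcj.continuousOn
    have hKi0 : 0 ≤ Ki := le_trans (norm_nonneg _) (hKi 0 (by simp [hR0]))
    have hKj0 : 0 ≤ Kj := le_trans (norm_nonneg _) (hKj 0 (by simp [hR0]))
    refine ⟨(2 * M * R + Ki + (2 * M * R + Kj)) / 2, ?_⟩
    rintro v ⟨q', qi, qj, mu, hi, hj, _, rfl⟩
    set Pi : EuclideanSpace ℝ (Fin d) × ℝ := (q', qi) with hPi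
    set Pj : EuclideanSpace ℝ (Fin d) × ℝ := (q', qj) with hPj
    have hmui : 2 * M * ‖Pi‖ - (2 * M * R + Ki) ≤ mu := by
      by_cases h : R ≤ ‖Pi‖
      · have := hRi Pi (le_trans (le_max_left Ri Rj |>.trans (le_max_left _ _)) h)
        rw [hi] at this
        have h0 : (0:ℝ) ≤ 2 * M * R := mul_nonneg (by linarith) hR0
        linarith
      · push_neg at h
        have hb := hKi Pi (by simpa [Metric.mem_closedBall, dist_zero_right] using h.le)
        rw [hi, Real.norm_eq_abs] at hb
        have h1 : -Ki ≤ mu := by have := (abs_le.mp hb).1; linarith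
        have h2 : 2 * M * ‖Pi‖ ≤ 2 * M * R :=
          mul_le_mul_of_nonneg_left h.le (by linarith)
        linarith
    have hmuj : 2 * M * ‖Pj‖ - (2 * M * R + Kj) ≤ mu := by
      by_cases h : R ≤ ‖Pj‖
      · have := hRj Pj (le_trans (le_max_right Ri Rj |>.trans (le_max_left _ _)) h)
        rw [hj] at this
        have h0 : (0:ℝ) ≤ 2 * M * R := mul_nonneg (by linarith) hR0
        linarith
      · push_neg at h
        have hb := hKj Pj (by simpa [Metric.mem_closedBall, dist_zero_right] using h.le)
        rw [hj, Real.norm_eq_abs] at hb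
        have h1 : -Kj ≤ mu := by have := (abs_le.mp hb).1; linarith
        have h2 : 2 * M * ‖Pj‖ ≤ 2 * M * R :=
          mul_le_mul_of_nonneg_left h.le (by linarith)
        linarith
    have hin : ⟪q', z'⟫ ≤ ‖q'‖ * ‖z'‖ := real_inner_le_norm q' z'
    have hq1 : ‖q'‖ ≤ ‖Pi‖ := norm_fst_le Pi
    have hqi1 : qi ≤ ‖Pi‖ := le_trans (le_abs_self qi) (norm_snd_le Pi)
    have hqj1 : qj * zj ≤ ‖Pj‖ * (-zj) := by
      have h1 : -qj ≤ |qj| := neg_le_abs qj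
      have h2 : |qj| ≤ ‖Pj‖ := norm_snd_le Pj
      nlinarith
    have hi1 : ⟪q', z'⟫ ≤ ‖Pi‖ * ‖z'‖ :=
      le_trans hin (mul_le_mul_of_nonneg_right hq1 (norm_nonneg z'))
    have hi2 : qi * zi ≤ ‖Pi‖ * zi := mul_le_mul_of_nonneg_right hqi1 hzi
    have hni : (0:ℝ) ≤ ‖Pi‖ := norm_nonneg _
    have hnj : (0:ℝ) ≤ ‖Pj‖ := norm_nonneg _
    have h3 : ‖Pi‖ * (‖z'‖ + zi) ≤ ‖Pi‖ * (M - 1) :=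
      mul_le_mul_of_nonneg_left (by rw [hM]; linarith) hni
    have h4 : ‖Pj‖ * (-zj) ≤ ‖Pj‖ * (M - 1) :=
      mul_le_mul_of_nonneg_left (by rw [hM]; have := norm_nonneg z'; linarith) hnj
    nlinarith [hi1, hi2, hqj1, hmui, hmuj, h3, h4, hni, hnj]
  -- define g
  set g : ℝ → ℝ := fun a => sSup (Set.range fun n : ℕ => (n : ℝ) * a - B n) with hg
  have hne : ∀ a : ℝ, (Set.range fun n : ℕ => (n : ℝ) * a - B n).Nonempty :=
    fun a => ⟨(0 : ℝ) * a - B 0, ⟨0, by norm_num⟩⟩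
  have hA0B : ∀ n : ℕ, A 0 ≤ B n := fun n => (hB n 0 (by simp)).1
  have bddRange : ∀ a : ℝ, 0 ≤ a →
      BddAbove (Set.range fun n : ℕ => (n : ℝ) * a - B n) := by
    intro a ha
    obtain ⟨R, hR⟩ := hsupi (a + 1)
    set R' : ℝ := max R 0 with hR'def
    refine ⟨max (R' * a - A 0) 0, ?_⟩
    rintro x ⟨n, rfl⟩
    show (n : ℝ) * a - B n ≤ max (R' * a - A 0) 0
    by_cases h : R' ≤ (n : ℝ)
    · have hnorm : ‖(((0 : EuclideanSpace ℝ (Fin d)), (n : ℝ)) :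
          EuclideanSpace ℝ (Fin d) × ℝ)‖ = (n : ℝ) := by
        rw [Prod.norm_def]
        simp only [norm_zero, Real.norm_eq_abs, Nat.abs_cast]
        exact max_eq_right (Nat.cast_nonneg n)
      have hHi := hR ((0 : EuclideanSpace ℝ (Fin d)), (n : ℝ))
        (by rw [hnorm]; exact le_trans (le_max_left R 0) h)
      rw [hnorm] at hHi
      have hBn : Hi ((0 : EuclideanSpace ℝ (Fin d)), (n : ℝ)) ≤ B n :=
        (hB n 0 (by simp)).2.1
      have : (n : ℝ) * a - B n ≤ -(n : ℝ) := by nlinarith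
      refine le_trans this (le_trans ?_ (le_max_right _ _))
      exact neg_nonpos.mpr (Nat.cast_nonneg n)
    · push_neg at h
      have h1 : (n : ℝ) * a ≤ R' * a := mul_le_mul_of_nonneg_right h.le ha
      have h2 := hA0B n
      refine le_trans ?_ (le_max_left _ _)
      linarith
  refine ⟨g, ?_, ?_, ?_⟩
  · -- monotone
    intro a ha b hb hab
    apply csSup_le (hne a)
    rintro x ⟨n, rfl⟩
    refine le_trans (show (n:ℝ) * a - B n ≤ (n:ℝ) * b - B n from ?_)
      (le_csSup (bddRange b hb) ⟨n, rfl⟩)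
    have : (n : ℝ) * a ≤ (n : ℝ) * b := mul_le_mul_of_nonneg_left hab (Nat.cast_nonneg n)
    linarith
  · -- superlinear
    rw [Filter.tendsto_atTop]
    intro b
    obtain ⟨n, hn⟩ := exists_nat_ge (b + 1)
    filter_upwards [Filter.eventually_ge_atTop (max 1 |B n|)] with a ha
    have ha1 : 1 ≤ a := le_trans (le_max_left _ _) ha
    have haB : |B n| ≤ a := le_trans (le_max_right _ _) ha
    have ha0 : (0 : ℝ) < a := by linarith
    have hga : (n : ℝ) * a - B n ≤ g a := le_csSup (bddRange a (by linarith)) ⟨n, rfl⟩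
    rw [le_div_iff₀ ha0]
    have hBa : B n ≤ a := le_trans (le_abs_self _) haB
    nlinarith
  · -- main inequality
    intro z' zi zj hzi hzj
    apply csSup_le (hne _)
    rintro x ⟨n, rfl⟩
    obtain ⟨v, hvmem, hvle⟩ := feas z' zi zj hzi hzj n
    exact le_trans hvle (le_csSup (bdd z' zi zj hzi hzj) hvmem)
end

section
/- Let T > 0, let H_L, H_R : ℝ^{d+1} → ℝ be continuous, quasiconvex and coercive, and let H_0 : ℝ^{d+1} → ℝ be continuous and coercive. Let u : (0,T) × ℝ^{d+1} → ℝ be upper semicontinuous and suppose that for every C¹ function φ : (0,T) × ℝ^{d+1} → ℝ and every point (t,X) ∈ (0,T) × ℝ^{d+1} at which u − φ attains a local maximum with u(t,X) = φ(t,X), writing X = (x', x_{d+1}) with x' ∈ ℝ^d, one has: ∂_t φ(t,X) + H_L(D_X φ(t,X)) ≤ 0 if x_{d+1} < 0; ∂_t φ(t,X) + H_R(D_X φ(t,X)) ≤ 0 if x_{d+1} > 0; and ∂_t φ(t,X) + H_0(D_X φ(t,X)) ≤ 0 if x_{d+1} = 0. Then for every t ∈ (0,T) and x' ∈ ℝ^d,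 u(t,(x',0)) = limsup_{(s,Y) → (t,(x',0)), y_{d+1} > 0} u(s,Y) = limsup_{(s,Y) → (t,(x',0)), y_{d+1} < 0} u(s,Y), where Y = (y', y_{d+1}). -/
/-!
Upper semicontinuity gives the upper bound for both one-sided limsups. For the lower bound,
suppose `u ≤ u(t₀, x₀, 0) - ε` near `(t₀, x₀, 0)` on the side `σ y > 0` (`σ = ±1`), and
maximise `u - φ` on a small closed ball, where
`φ = u(t₀, x₀, 0) + B (t - t₀)² + B ‖x - x₀‖² + K y² - σ λ y`.
On the side `σ y > 0` the slope term gains at most `λ² / 4K < ε`, so the maximum lies in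
`σ y ≤ 0`, and there the quadratic terms keep it inside the open ball. At that point
`|∂_y φ| ≥ λ`, so by coercivity `H(D_X φ)` exceeds the bound `2 B r` on `|∂_t φ|`, which
contradicts the subsolution inequality.
-/

open Filter Set Metric Topology

theorem Filter.eq_limsup_of_forall_eventually_lt_of_forall_frequently_gt {ι β : Type*}
    [ConditionallyCompleteLinearOrder β] [NoMaxOrder β] [NoMinOrder β]
    {F : Filter ι} {u : ι → β} {c : β}
    (hlt : ∀ y > c, ∀ᶠ i in F, u i < y) (hgt : ∀ y < c, ∃ᶠ i in F, y < u i) :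
    c = limsup u F := by
  obtain ⟨a, ha⟩ := exists_gt c
  obtain ⟨b, hb⟩ := exists_lt c
  have hbdd : F.IsBoundedUnder (· ≤ ·) u := ⟨a, (hlt a ha).mono fun _ => le_of_lt⟩
  have hcobdd : F.IsCoboundedUnder (· ≤ ·) u :=
    IsCoboundedUnder.of_frequently_ge ((hgt b hb).mono fun _ => le_of_lt)
  exact le_antisymm ((le_limsup_iff hcobdd hbdd).2 hgt) ((limsup_le_iff hcobdd hbdd).2 hlt)

def Coercive {F : Type*} [Norm F] (H : F → ℝ) : Prop :=
  ∀ M : ℝ, ∃ R : ℝ, ∀ P : F, R ≤ ‖P‖ → M ≤ H P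

namespace Coercive

variable {F : Type*} [Norm F] {H H' : F → ℝ}

theorem min (hH : Coercive H) (hH' : Coercive H') : Coercive fun P => min (H P) (H' P) := by
  intro M
  obtain ⟨R, hR⟩ := hH M
  obtain ⟨R', hR'⟩ := hH' M
  exact ⟨max R R', fun P hP => le_min (hR P (le_of_max_le_left hP)) (hR' P (le_of_max_le_right hP))⟩

theorem exists_nonneg_forall_abs_snd {G : Type*} [SeminormedAddCommGroup G]
    {H : G × ℝ → ℝ} (hH : Coercive H) (M : ℝ) :
    ∃ lam, 0 ≤ lam ∧ ∀ P : G × ℝ, lam ≤ |P.2| → M ≤ H P := by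
  obtain ⟨R, hR⟩ := hH M
  refine ⟨max R 0, le_max_right _ _, fun P hP => hR P ?_⟩
  calc R ≤ |P.2| := (le_max_left _ _).trans hP
    _ = ‖P.2‖ := (Real.norm_eq_abs _).symm
    _ ≤ ‖P‖ := norm_snd_le P

end Coercive

variable {E : Type*} [NormedAddCommGroup E]

def testFn (c B K lam σ t₀ : ℝ) (x₀ : E) (q : ℝ × E × ℝ) : ℝ :=
  c + B * (q.1 - t₀) ^ 2 + B * ‖q.2.1 - x₀‖ ^ 2 + K * q.2.2 ^ 2 - σ * lam * q.2.2

variable {c B K lam σ t₀ : ℝ} {x₀ : E}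

theorem contDiff_testFn [InnerProductSpace ℝ E] : ContDiff ℝ 1 (testFn c B K lam σ t₀ x₀) := by
  have : ContDiff ℝ 1 fun q : ℝ × E × ℝ => ‖q.2.1 - x₀‖ ^ 2 :=
    (contDiff_snd.fst.sub contDiff_const).norm_sq ℝ
  unfold testFn
  fun_prop

theorem deriv_testFn_time (t : ℝ) (X : E × ℝ) :
    deriv (fun s => testFn c B K lam σ t₀ x₀ (s, X)) t = 2 * B * (t - t₀) := by
  simp [testFn]
  ring

theorem deriv_testFn_normal (t : ℝ) (X : E × ℝ) :
    deriv (fun y => testFn c B K lam σ t₀ x₀ (t, X.1, y)) X.2 = 2 * K * X.2 - σ * lam := by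
  have h := (((hasDerivAt_pow 2 X.2).const_mul K).const_add
    (c + B * (t - t₀) ^ 2 + B * ‖X.1 - x₀‖ ^ 2)).sub ((hasDerivAt_id X.2).const_mul (σ * lam))
  exact h.deriv.trans (by ring)

theorem testFn_add_const (M : ℝ) (q : ℝ × E × ℝ) :
    testFn (c + M) B K lam σ t₀ x₀ q = testFn c B K lam σ t₀ x₀ q + M := by
  unfold testFn
  ring

@[simp]
theorem testFn_center : testFn c B K lam σ t₀ x₀ (t₀, x₀, 0) = c := by
  simp [testFn]

theorem sub_lt_testFn {ε : ℝ} (hσ : |σ| = 1) (hB : 0 ≤ B) (hK : 0 < K)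
    (hlam : lam ^ 2 < 4 * K * ε) (q : ℝ × E × ℝ) : c - ε < testFn c B K lam σ t₀ x₀ q := by
  have hσ2 : σ ^ 2 = 1 := by rw [← sq_abs, hσ, one_pow]
  have hsq : (2 * K * (σ * q.2.2) - lam) ^ 2
      = lam ^ 2 - 4 * K * (σ * lam * q.2.2 - K * q.2.2 ^ 2) := by
    linear_combination (4 * K ^ 2 * q.2.2 ^ 2) * hσ2
  have hquad : σ * lam * q.2.2 - K * q.2.2 ^ 2 < ε := by
    refine lt_of_mul_lt_mul_left ?_ (by positivity : (0 : ℝ) ≤ 4 * K)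
    nlinarith [sq_nonneg (2 * K * (σ * q.2.2) - lam)]
  unfold testFn
  nlinarith [sq_nonneg (q.1 - t₀), sq_nonneg ‖q.2.1 - x₀‖]

theorem dist_lt_of_testFn_lt {r : ℝ} (hr : 0 < r) (hB : 1 ≤ B * r ^ 2) (hK : 1 ≤ K * r ^ 2)
    (hlam : 0 ≤ lam) {q : ℝ × E × ℝ} (hq : σ * q.2.2 ≤ 0)
    (h : testFn c B K lam σ t₀ x₀ q < c + 1) : dist q (t₀, x₀, 0) < r := by
  have nonneg_of : ∀ C : ℝ, 1 ≤ C * r ^ 2 → 0 ≤ C := fun C hC => by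
    by_contra! hC0
    nlinarith [sq_nonneg r]
  have lt_of_sq : ∀ a C : ℝ, 0 ≤ a → 1 ≤ C * r ^ 2 → C * a ^ 2 < 1 → a < r := by
    intro a C ha hC h
    by_contra! har
    nlinarith [mul_le_mul_of_nonneg_left (pow_le_pow_left₀ hr.le har 2) (nonneg_of C hC)]
  have ht := mul_nonneg (nonneg_of B hB) (sq_nonneg (q.1 - t₀))
  have hx := mul_nonneg (nonneg_of B hB) (sq_nonneg ‖q.2.1 - x₀‖)
  have hy := mul_nonneg (nonneg_of K hK) (sq_nonneg q.2.2)
  have hslope := mul_nonneg hlam (neg_nonneg.2 hq)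
  unfold testFn at h
  rw [Prod.dist_eq, Prod.dist_eq, Real.dist_eq, Real.dist_eq, dist_eq_norm, sub_zero]
  refine max_lt (lt_of_sq _ B (abs_nonneg _) hB ?_)
    (max_lt (lt_of_sq _ B (norm_nonneg _) hB ?_) (lt_of_sq _ K (abs_nonneg _) hK ?_)) <;>
  simp only [sq_abs] <;> nlinarith

theorem exists_max_sub_on_closedBall {α : Type*} [PseudoMetricSpace α] [ProperSpace α]
    {u φ : α → ℝ} {p : α} {r : ℝ} (hr : 0 ≤ r) (hu : UpperSemicontinuousOn u (closedBall p r))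
    (hφ : Continuous φ) :
    ∃ q ∈ closedBall p r, ∀ z ∈ closedBall p r, u z - φ z ≤ u q - φ q := by
  simp only [sub_eq_add_neg]
  exact (hu.add (hφ.neg.upperSemicontinuous.upperSemicontinuousOn _)).exists_isMaxOn
    (nonempty_closedBall.2 hr) (isCompact_closedBall p r)

variable [InnerProductSpace ℝ E] [CompleteSpace E]

/-- `u` is a viscosity subsolution of `∂ₜu + H(D_X u) = 0` at the points of `(0, T) × A`. -/
def IsSubsolutionOn (u : ℝ × E × ℝ → ℝ) (T : ℝ) (H : E × ℝ → ℝ) (A : Set (E × ℝ)) : Prop :=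
  ∀ φ : ℝ × E × ℝ → ℝ, ContDiff ℝ 1 φ → ∀ (t : ℝ) (X : E × ℝ), t ∈ Ioo 0 T → X ∈ A →
    u (t, X) = φ (t, X) → (∀ᶠ q in 𝓝[Ioo 0 T ×ˢ univ] (t, X), u q ≤ φ q) →
    deriv (fun s => φ (s, X)) t +
      H (gradient (fun y' => φ (t, (y', X.2))) X.1, deriv (fun y => φ (t, (X.1, y))) X.2) ≤ 0

theorem deriv_testFn_add_pos {H : E × ℝ → ℝ} {r : ℝ} (hσ : |σ| = 1) (hB : 0 ≤ B) (hK : 0 ≤ K)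
    (hH : ∀ P : E × ℝ, lam ≤ |P.2| → 2 * B * r + 1 ≤ H P) {q : ℝ × E × ℝ}
    (hq : σ * q.2.2 ≤ 0) (ht : |q.1 - t₀| ≤ r) :
    0 < deriv (fun s => testFn c B K lam σ t₀ x₀ (s, q.2)) q.1 +
      H (gradient (fun y' => testFn c B K lam σ t₀ x₀ (q.1, y', q.2.2)) q.2.1,
        deriv (fun y => testFn c B K lam σ t₀ x₀ (q.1, q.2.1, y)) q.2.2) := by
  rw [deriv_testFn_time, deriv_testFn_normal]
  have hslope : lam ≤ |2 * K * q.2.2 - σ * lam| := by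
    have hσ2 : σ * σ = 1 := by rw [← abs_mul_abs_self, hσ, one_mul]
    have hneg : -(σ * (2 * K * q.2.2 - σ * lam)) = lam - 2 * K * (σ * q.2.2) := by
      linear_combination lam * hσ2
    rw [← one_mul |_|, ← hσ, ← abs_mul]
    exact le_abs.2 (Or.inr (by nlinarith))
  have hHam := hH (gradient (fun y' => testFn c B K lam σ t₀ x₀ (q.1, y', q.2.2)) q.2.1, _) hslope
  nlinarith [(abs_le.1 ht).1]

namespace IsSubsolutionOn

variable {u : ℝ × E × ℝ → ℝ} {T : ℝ} {H H' : E × ℝ → ℝ} {A A' : Set (E × ℝ)}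

theorem exists_lt_on_side [FiniteDimensional ℝ E] (hσ : |σ| = 1) (hH : Coercive H)
    (hsub : IsSubsolutionOn u T H {X | σ * X.2 ≤ 0}) {t r y : ℝ} {x : E} (hr : 0 < r)
    (hD : closedBall (t, x, 0) r ⊆ Ioo 0 T ×ˢ (univ : Set (E × ℝ)))
    (husc : UpperSemicontinuousOn u (closedBall (t, x, 0) r))
    (hbdd : ∀ q ∈ closedBall (t, x, 0) r, u q < u (t, x, 0) + 1) (hy : y < u (t, x, 0)) :
    ∃ q ∈ closedBall (t, x, 0) r, 0 < σ * q.2.2 ∧ y < u q := by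
  by_contra! hdrop
  set c := u (t, x, 0)
  obtain ⟨B, hB0, hBr⟩ : ∃ B : ℝ, 0 ≤ B ∧ B * r ^ 2 = 1 :=
    ⟨(r ^ 2)⁻¹, by positivity, inv_mul_cancel₀ (by positivity)⟩
  obtain ⟨lam, hlam, hHlam⟩ := hH.exists_nonneg_forall_abs_snd (2 * B * r + 1)
  obtain ⟨K, hK0, hKr, hKlam⟩ : ∃ K : ℝ, 0 < K ∧ 1 ≤ K * r ^ 2 ∧ lam ^ 2 < 4 * K * (c - y) := by
    have hcy : 0 < c - y := sub_pos.2 hy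
    refine ⟨B + lam ^ 2 / (c - y) + 1, by positivity, ?_, ?_⟩
    · nlinarith [div_nonneg (sq_nonneg lam) hcy.le, sq_nonneg r]
    · have : lam ^ 2 / (c - y) * (c - y) = lam ^ 2 := div_mul_cancel₀ _ hcy.ne'
      nlinarith [div_nonneg (sq_nonneg lam) hcy.le]
  obtain ⟨q, hq, hmax⟩ := exists_max_sub_on_closedBall (φ := testFn c B K lam σ t x) hr.le husc
    contDiff_testFn.continuous
  set M := u q - testFn c B K lam σ t x q
  have hM : 0 ≤ M := by simpa [c] using hmax _ (mem_closedBall_self hr.le)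
  have hside : σ * q.2.2 ≤ 0 := by
    by_contra! hpos
    linarith [hdrop q hq hpos, sub_lt_testFn (c := c) (t₀ := t) (x₀ := x) hσ hB0 hK0 hKlam q]
  have hball : dist q (t, x, 0) < r :=
    dist_lt_of_testFn_lt (c := c) hr hBr.ge hKr hlam hside (by linarith [hbdd q hq])
  have htouch : ∀ᶠ z in 𝓝 q, u z ≤ testFn (c + M) B K lam σ t x z := by
    filter_upwards [isOpen_ball.mem_nhds hball] with z hz
    rw [testFn_add_const]
    linarith [hmax z (ball_subset_closedBall hz)]
  have hvisc := hsub _ contDiff_testFn q.1 q.2 (hD hq).1 hside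
    (by simp [testFn_add_const, M]) (htouch.filter_mono nhdsWithin_le_nhds)
  have hdist : |q.1 - t| ≤ r := by
    rw [← Real.dist_eq]
    exact (le_max_left _ _).trans_eq (Prod.dist_eq ..).symm |>.trans hball.le
  exact (deriv_testFn_add_pos hσ hB0 hK0.le hHlam hside hdist).not_ge hvisc

theorem frequently_lt [FiniteDimensional ℝ E] (hσ : |σ| = 1) (hH : Coercive H)
    (husc : UpperSemicontinuousOn u (Ioo 0 T ×ˢ univ))
    (hsub : IsSubsolutionOn u T H {X | σ * X.2 ≤ 0}) {t : ℝ} (ht : t ∈ Ioo 0 T) (x : E)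
    {y : ℝ} (hy : y < u (t, x, 0)) :
    ∃ᶠ q in 𝓝[{q | q.1 ∈ Ioo 0 T ∧ 0 < σ * q.2.2}] (t, x, 0), y < u q := by
  have hD : Ioo 0 T ×ˢ univ ∈ 𝓝 (t, x, (0 : ℝ)) :=
    (isOpen_Ioo.prod isOpen_univ).mem_nhds ⟨ht, trivial⟩
  have hbdd : ∀ᶠ q in 𝓝 (t, x, 0), u q < u (t, x, 0) + 1 := by
    simpa [nhdsWithin_eq_nhds.2 hD] using husc (t, x, 0) ⟨ht, trivial⟩ _ (lt_add_one _)
  obtain ⟨r₀, hr₀, hloc⟩ :=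
    nhds_basis_closedBall.eventually_iff.1 ((eventually_mem_set.2 hD).and hbdd)
  rw [(nhdsWithin_hasBasis nhds_basis_closedBall _).frequently_iff]
  intro r hr
  have hr' : closedBall (t, x, (0 : ℝ)) (min r r₀) ⊆ closedBall (t, x, 0) r₀ :=
    closedBall_subset_closedBall (min_le_right _ _)
  obtain ⟨q, hq, hpos, hyq⟩ := hsub.exists_lt_on_side hσ hH (lt_min hr hr₀)
    (fun q hq => (hloc (hr' hq)).1) (husc.mono fun q hq => (hloc (hr' hq)).1)
    (fun q hq => (hloc (hr' hq)).2) hy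
  exact ⟨q, ⟨closedBall_subset_closedBall (min_le_left _ _) hq, (hloc (hr' hq)).1.1, hpos⟩, hyq⟩

theorem eq_limsup_nhdsWithin_side [FiniteDimensional ℝ E] (hσ : |σ| = 1) (hH : Coercive H)
    (husc : UpperSemicontinuousOn u (Ioo 0 T ×ˢ univ))
    (hsub : IsSubsolutionOn u T H {X | σ * X.2 ≤ 0}) {t : ℝ} (ht : t ∈ Ioo 0 T) (x : E) :
    u (t, x, 0) = limsup u (𝓝[{q | q.1 ∈ Ioo 0 T ∧ 0 < σ * q.2.2}] (t, x, 0)) := by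
  have hside : {q : ℝ × E × ℝ | q.1 ∈ Ioo 0 T ∧ 0 < σ * q.2.2} ⊆ Ioo 0 T ×ˢ univ :=
    fun q hq => ⟨hq.1, trivial⟩
  exact eq_limsup_of_forall_eventually_lt_of_forall_frequently_gt
    (fun y hy => nhdsWithin_mono _ hside (husc (t, x, 0) ⟨ht, trivial⟩ y hy))
    (fun _ hy => hsub.frequently_lt hσ hH husc ht x hy)

theorem min (h : IsSubsolutionOn u T H A) (h' : IsSubsolutionOn u T H' A') {A'' : Set (E × ℝ)}
    (hA : A'' ⊆ A ∪ A') : IsSubsolutionOn u T (fun P => min (H P) (H' P)) A'' := by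
  intro φ hφ t X ht hX heq hle
  rcases hA hX with hX | hX
  · exact (add_le_add_right (min_le_left _ _) _).trans (h φ hφ t X ht hX heq hle)
  · exact (add_le_add_right (min_le_right _ _) _).trans (h' φ hφ t X ht hX heq hle)

end IsSubsolutionOn

theorem weak_continuity_from_viscosity_general (d : ℕ) (T : ℝ)
    (HL HR H0 : EuclideanSpace ℝ (Fin d) × ℝ → ℝ)
    (hLcoer : ∀ M : ℝ, ∃ R : ℝ, ∀ P : EuclideanSpace ℝ (Fin d) × ℝ, R ≤ ‖P‖ → M ≤ HL P)
    (hRcoer : ∀ M : ℝ, ∃ R : ℝ, ∀ P : EuclideanSpace ℝ (Fin d) × ℝ, R ≤ ‖P‖ → M ≤ HR P)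
    (h0coer : ∀ M : ℝ, ∃ R : ℝ, ∀ P : EuclideanSpace ℝ (Fin d) × ℝ, R ≤ ‖P‖ → M ≤ H0 P)
    (u : ℝ × (EuclideanSpace ℝ (Fin d) × ℝ) → ℝ)
    (husc : UpperSemicontinuousOn u
      (Set.Ioo 0 T ×ˢ (Set.univ : Set (EuclideanSpace ℝ (Fin d) × ℝ))))
    (hsub : ∀ φ : ℝ × (EuclideanSpace ℝ (Fin d) × ℝ) → ℝ, ContDiff ℝ 1 φ →
      ∀ (t : ℝ) (X : EuclideanSpace ℝ (Fin d) × ℝ), t ∈ Set.Ioo 0 T →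
      u (t, X) = φ (t, X) →
      (∀ᶠ q in nhdsWithin (t, X)
          (Set.Ioo 0 T ×ˢ (Set.univ : Set (EuclideanSpace ℝ (Fin d) × ℝ))),
        u q ≤ φ q) →
      ((X.2 < 0 → deriv (fun s => φ (s, X)) t +
          HL (gradient (fun y' => φ (t, (y', X.2))) X.1,
              deriv (fun y => φ (t, (X.1, y))) X.2) ≤ 0) ∧
       (0 < X.2 → deriv (fun s => φ (s, X)) t +
          HR (gradient (fun y' => φ (t, (y', X.2))) X.1,
              deriv (fun y => φ (t, (X.1, y))) X.2) ≤ 0) ∧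
       (X.2 = 0 → deriv (fun s => φ (s, X)) t +
          H0 (gradient (fun y' => φ (t, (y', X.2))) X.1,
              deriv (fun y => φ (t, (X.1, y))) X.2) ≤ 0))) :
    ∀ t ∈ Set.Ioo (0 : ℝ) T, ∀ x' : EuclideanSpace ℝ (Fin d),
      u (t, (x', 0)) = Filter.limsup u (nhdsWithin (t, (x', (0 : ℝ)))
          {q : ℝ × (EuclideanSpace ℝ (Fin d) × ℝ) | q.1 ∈ Set.Ioo 0 T ∧ 0 < q.2.2}) ∧
      u (t, (x', 0)) = Filter.limsup u (nhdsWithin (t, (x', (0 : ℝ)))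
          {q : ℝ × (EuclideanSpace ℝ (Fin d) × ℝ) | q.1 ∈ Set.Ioo 0 T ∧ q.2.2 < 0}) := by
  intro t ht x
  have hL : IsSubsolutionOn u T HL {X | X.2 < 0} :=
    fun φ hφ s X hs hX heq hle => (hsub φ hφ s X hs heq hle).1 hX
  have hR : IsSubsolutionOn u T HR {X | 0 < X.2} :=
    fun φ hφ s X hs hX heq hle => (hsub φ hφ s X hs heq hle).2.1 hX
  have h0 : IsSubsolutionOn u T H0 {X | X.2 = 0} :=
    fun φ hφ s X hs hX heq hle => (hsub φ hφ s X hs heq hle).2.2 hX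
  have hpos := (hL.min h0 fun X hX => (by simpa using hX : X.2 ≤ 0).lt_or_eq
    ).eq_limsup_nhdsWithin_side (σ := 1) (by norm_num) (Coercive.min hLcoer h0coer) husc ht x
  have hneg := (hR.min h0 fun X hX => (by simpa using hX : 0 ≤ X.2).lt_or_eq.imp id Eq.symm
    ).eq_limsup_nhdsWithin_side (σ := -1) (by norm_num) (Coercive.min hRcoer h0coer) husc ht x
  simp only [one_mul, neg_mul, neg_pos] at hpos hneg
  exact ⟨hpos, hneg⟩

/-- "weak continuity" with C¹ test functions: if `u` is upper
semicontinuous on `(0,T) × ℝ^{d+1}` and every C¹ test function touching `u` from above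
satisfies the three viscosity inequalities (with `H_L` below, `H_R` above and `H_0` on the
hyperplane `{x_{d+1} = 0}`), where `H_L, H_R` are continuous quasiconvex coercive and `H_0`
is continuous coercive, then at every point of the hyperplane `u` coincides with its
one-sided upper limits from both sides. -/
theorem weak_continuity_from_viscosity (d : ℕ) (T : ℝ) (hT : 0 < T)
    (HL HR H0 : EuclideanSpace ℝ (Fin d) × ℝ → ℝ)
    (hLcont : Continuous HL) (hRcont : Continuous HR) (h0cont : Continuous H0)
    (hLqc : ∀ lam : ℝ, Convex ℝ {P : EuclideanSpace ℝ (Fin d) × ℝ | HL P ≤ lam})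
    (hRqc : ∀ lam : ℝ, Convex ℝ {P : EuclideanSpace ℝ (Fin d) × ℝ | HR P ≤ lam})
    (hLcoer : ∀ M : ℝ, ∃ R : ℝ, ∀ P : EuclideanSpace ℝ (Fin d) × ℝ, R ≤ ‖P‖ → M ≤ HL P)
    (hRcoer : ∀ M : ℝ, ∃ R : ℝ, ∀ P : EuclideanSpace ℝ (Fin d) × ℝ, R ≤ ‖P‖ → M ≤ HR P)
    (h0coer : ∀ M : ℝ, ∃ R : ℝ, ∀ P : EuclideanSpace ℝ (Fin d) × ℝ, R ≤ ‖P‖ → M ≤ H0 P)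
    (u : ℝ × (EuclideanSpace ℝ (Fin d) × ℝ) → ℝ)
    (husc : UpperSemicontinuousOn u
      (Set.Ioo 0 T ×ˢ (Set.univ : Set (EuclideanSpace ℝ (Fin d) × ℝ))))
    (hsub : ∀ φ : ℝ × (EuclideanSpace ℝ (Fin d) × ℝ) → ℝ, ContDiff ℝ 1 φ →
      ∀ (t : ℝ) (X : EuclideanSpace ℝ (Fin d) × ℝ), t ∈ Set.Ioo 0 T →
      u (t, X) = φ (t, X) →
      (∀ᶠ q in nhdsWithin (t, X)
          (Set.Ioo 0 T ×ˢ (Set.univ : Set (EuclideanSpace ℝ (Fin d) × ℝ))),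
        u q ≤ φ q) →
      ((X.2 < 0 → deriv (fun s => φ (s, X)) t +
          HL (gradient (fun y' => φ (t, (y', X.2))) X.1,
              deriv (fun y => φ (t, (X.1, y))) X.2) ≤ 0) ∧
       (0 < X.2 → deriv (fun s => φ (s, X)) t +
          HR (gradient (fun y' => φ (t, (y', X.2))) X.1,
              deriv (fun y => φ (t, (X.1, y))) X.2) ≤ 0) ∧
       (X.2 = 0 → deriv (fun s => φ (s, X)) t +
          H0 (gradient (fun y' => φ (t, (y', X.2))) X.1,
              deriv (fun y => φ (t, (X.1, y))) X.2) ≤ 0))) :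
    ∀ t ∈ Set.Ioo (0 : ℝ) T, ∀ x' : EuclideanSpace ℝ (Fin d),
      u (t, (x', 0)) = Filter.limsup u (nhdsWithin (t, (x', (0 : ℝ)))
          {q : ℝ × (EuclideanSpace ℝ (Fin d) × ℝ) | q.1 ∈ Set.Ioo 0 T ∧ 0 < q.2.2}) ∧
      u (t, (x', 0)) = Filter.limsup u (nhdsWithin (t, (x', (0 : ℝ)))
          {q : ℝ × (EuclideanSpace ℝ (Fin d) × ℝ) | q.1 ∈ Set.Ioo 0 T ∧ q.2.2 < 0}) :=
  weak_continuity_from_viscosity_general d T HL HR H0 hLcoer hRcoer h0coer u husc hsub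
end

section
/- Let H_L, H_R : ℝ^d × ℝ → ℝ be continuous, quasiconvex and coercive. Set A_L(p') = min_p H_L(p',p), A_R(p') = min_p H_R(p',p), A_0(p') = max(A_L(p'), A_R(p')); let π_L^0(p') be the maximal minimizer of p ↦ H_L(p',p) and π_R^0(p') the minimal minimizer of p ↦ H_R(p',p); let A^*(p') = max over p in the closed interval with endpoints π_L^0(p') and π_R^0(p') of min(H_L(p',p), H_R(p',p)); and let A_I^+(p') = max(A_0(p'), A^*(p')). Then for every p' ∈ ℝ^d and every p ∈ ℝ, A_I^+(p') ≤ max(H_L(p',p), H_R(p',p)). -/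
/-- If `H` is quasiconvex and `m` is a minimizer of `H (p', ·)`, then for `q` between
`p` and `m` we have `H (p', q) ≤ H (p', p)`. -/
lemma slice_qc {d : ℕ} (H : EuclideanSpace ℝ (Fin d) × ℝ → ℝ)
    (hqc : ∀ lam : ℝ, Convex ℝ {P : EuclideanSpace ℝ (Fin d) × ℝ | H P ≤ lam})
    (p' : EuclideanSpace ℝ (Fin d)) (m p q : ℝ)
    (hm : ∀ r : ℝ, H (p', m) ≤ H (p', r)) (hq : q ∈ Set.uIcc p m) :
    H (p', q) ≤ H (p', p) := by
  rw [← segment_eq_uIcc] at hq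
  obtain ⟨a, b, ha, hb, hab, hcomb⟩ := hq
  have h1 : (p', p) ∈ {P : EuclideanSpace ℝ (Fin d) × ℝ | H P ≤ H (p', p)} := Set.mem_setOf_eq ▸ le_refl _
  have h2 : (p', m) ∈ {P : EuclideanSpace ℝ (Fin d) × ℝ | H P ≤ H (p', p)} := hm p
  have := hqc (H (p', p)) h1 h2 ha hb hab
  have hpt : a • ((p', p) : EuclideanSpace ℝ (Fin d) × ℝ) + b • (p', m) = (p', q) := by
    refine Prod.ext ?_ ?_
    · show a • p' + b • p' = p'
      rw [← add_smul, hab, one_smul]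
    · exact hcomb
  rwa [hpt] at this

/-- for continuous quasiconvex coercive `H_L, H_R`, with `A_L, A_R` their
partial minima, `π_L^0` the maximal minimizer of `H_L (p', ·)`, `π_R^0` the minimal
minimizer of `H_R (p', ·)`, `A* p'` the maximum of `min (H_L, H_R)` over the closed
interval with endpoints `π_L^0 p'` and `π_R^0 p'`, and `A_I^+ = max (A_0, A*)`:
`A_I^+ p' ≤ max (H_L (p', p)) (H_R (p', p))` for all `p', p`. -/
theorem AIplus_le_max (d : ℕ)
    (HL HR : EuclideanSpace ℝ (Fin d) × ℝ → ℝ)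
    (hLcont : Continuous HL) (hRcont : Continuous HR)
    (hLqc : ∀ lam : ℝ, Convex ℝ {P : EuclideanSpace ℝ (Fin d) × ℝ | HL P ≤ lam})
    (hRqc : ∀ lam : ℝ, Convex ℝ {P : EuclideanSpace ℝ (Fin d) × ℝ | HR P ≤ lam})
    (hLcoer : ∀ M : ℝ, ∃ R : ℝ, ∀ P : EuclideanSpace ℝ (Fin d) × ℝ, R ≤ ‖P‖ → M ≤ HL P)
    (hRcoer : ∀ M : ℝ, ∃ R : ℝ, ∀ P : EuclideanSpace ℝ (Fin d) × ℝ, R ≤ ‖P‖ → M ≤ HR P)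
    (AL AR : EuclideanSpace ℝ (Fin d) → ℝ)
    (hAL : ∀ p', IsLeast (Set.range fun p : ℝ => HL (p', p)) (AL p'))
    (hAR : ∀ p', IsLeast (Set.range fun p : ℝ => HR (p', p)) (AR p'))
    (πL0 πR0 : EuclideanSpace ℝ (Fin d) → ℝ)
    (hπL0 : ∀ p', IsGreatest {p : ℝ | ∀ q : ℝ, HL (p', p) ≤ HL (p', q)} (πL0 p'))
    (hπR0 : ∀ p', IsLeast {p : ℝ | ∀ q : ℝ, HR (p', p) ≤ HR (p', q)} (πR0 p'))
    (Astar : EuclideanSpace ℝ (Fin d) → ℝ)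
    (hAstar : ∀ p', IsGreatest
      ((fun p : ℝ => min (HL (p', p)) (HR (p', p))) '' Set.uIcc (πL0 p') (πR0 p'))
      (Astar p')) :
    ∀ (p' : EuclideanSpace ℝ (Fin d)) (p : ℝ),
      max (max (AL p') (AR p')) (Astar p') ≤ max (HL (p', p)) (HR (p', p)) := by
  intro p' p
  have hL := (hπL0 p').1
  have hR := (hπR0 p').1
  refine max_le (max_le ?_ ?_) ?_
  · exact le_trans ((hAL p').2 ⟨p, rfl⟩) (le_max_left _ _)
  · exact le_trans ((hAR p').2 ⟨p, rfl⟩) (le_max_right _ _)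
  · obtain ⟨q, hq, hval⟩ := (hAstar p').1
    rw [← hval]
    rcases Set.mem_uIcc.mp hq with ⟨h1, h2⟩ | ⟨h1, h2⟩
    · -- πL0 ≤ q ≤ πR0
      rcases le_total p q with hpq | hpq
      · -- p ≤ q ≤ πR0, so HR q ≤ HR p
        have : HR (p', q) ≤ HR (p', p) :=
          slice_qc HR hRqc p' (πR0 p') p q hR (Set.mem_uIcc.mpr (Or.inl ⟨hpq, h2⟩))
        exact le_trans (min_le_right _ _) (le_trans this (le_max_right _ _))
      · -- πL0 ≤ q ≤ p, so HL q ≤ HL p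
        have : HL (p', q) ≤ HL (p', p) :=
          slice_qc HL hLqc p' (πL0 p') p q hL (Set.mem_uIcc.mpr (Or.inr ⟨h1, hpq⟩))
        exact le_trans (min_le_left _ _) (le_trans this (le_max_left _ _))
    · -- πR0 ≤ q ≤ πL0
      rcases le_total p q with hpq | hpq
      · have : HL (p', q) ≤ HL (p', p) :=
          slice_qc HL hLqc p' (πL0 p') p q hL (Set.mem_uIcc.mpr (Or.inl ⟨hpq, h2⟩))
        exact le_trans (min_le_left _ _) (le_trans this (le_max_left _ _))
      · have : HR (p', q) ≤ HR (p', p) :=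
          slice_qc HR hRqc p' (πR0 p') p q hR (Set.mem_uIcc.mpr (Or.inr ⟨h1, hpq⟩))
        exact le_trans (min_le_right _ _) (le_trans this (le_max_right _ _))
end

section
/- Let H_L, H_R : ℝ^d × ℝ → ℝ be continuous, quasiconvex and coercive. Set A_L(p') = min_p H_L(p',p), A_R(p') = min_p H_R(p',p), A_0(p') = max(A_L(p'), A_R(p')); let π_L^0(p') be the maximal minimizer of p ↦ H_L(p',p) and π_R^0(p') the minimal minimizer of p ↦ H_R(p',p); let A^*(p') = max over p in the closed interval with endpoints π_L^0(p') and π_R^0(p') of min(H_L(p',p), H_R(p',p)); let A_I^+(p') = max(A_0(p'), A^*(p')) and A_I^-(p') = A_I^+(p') if π_R^0(p') < π_L^0(p') and A_I^-(p') = A_0(p') if π_R^0(p') ≥ π_L^0(p'). Define H_L^+(p',p) = H_L(p',p) if p ≥ π_L^0(p') and H_L^+(p',p) = A_L(p') if p < π_L^0(p'); and H_R^-(p',p) = H_R(p',p) if p ≤ π_R^0(p') and H_R^-(p',p) = A_R(p') if p > π_R^0(p'). Then for every p' ∈ ℝ^d, p ∈ ℝ and λ ∈ ℝ: if max(A_I^-(p'),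 H_L^+(p',p), H_R^-(p',p)) ≤ λ, then min(H_L(p',p), H_R(p',p)) ≤ λ. -/
/-- with the notation of Statement 18, `A_I^- = A_I^+` if `π_R^0 < π_L^0`
and `A_I^- = A_0` otherwise, `H_L^+` the nondecreasing part of `H_L` and `H_R^-` the
nonincreasing part of `H_R`: if `max (A_I^- p') (H_L^+ (p', p)) (H_R^- (p', p)) ≤ λ`
then `min (H_L (p', p)) (H_R (p', p)) ≤ λ`. -/
theorem ishii_subsolution_inequality (d : ℕ)
    (HL HR : EuclideanSpace ℝ (Fin d) × ℝ → ℝ)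
    (hLcont : Continuous HL) (hRcont : Continuous HR)
    (hLqc : ∀ lam : ℝ, Convex ℝ {P : EuclideanSpace ℝ (Fin d) × ℝ | HL P ≤ lam})
    (hRqc : ∀ lam : ℝ, Convex ℝ {P : EuclideanSpace ℝ (Fin d) × ℝ | HR P ≤ lam})
    (hLcoer : ∀ M : ℝ, ∃ R : ℝ, ∀ P : EuclideanSpace ℝ (Fin d) × ℝ, R ≤ ‖P‖ → M ≤ HL P)
    (hRcoer : ∀ M : ℝ, ∃ R : ℝ, ∀ P : EuclideanSpace ℝ (Fin d) × ℝ, R ≤ ‖P‖ → M ≤ HR P)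
    (AL AR : EuclideanSpace ℝ (Fin d) → ℝ)
    (hAL : ∀ p', IsLeast (Set.range fun p : ℝ => HL (p', p)) (AL p'))
    (hAR : ∀ p', IsLeast (Set.range fun p : ℝ => HR (p', p)) (AR p'))
    (πL0 πR0 : EuclideanSpace ℝ (Fin d) → ℝ)
    (hπL0 : ∀ p', IsGreatest {p : ℝ | ∀ q : ℝ, HL (p', p) ≤ HL (p', q)} (πL0 p'))
    (hπR0 : ∀ p', IsLeast {p : ℝ | ∀ q : ℝ, HR (p', p) ≤ HR (p', q)} (πR0 p'))
    (Astar : EuclideanSpace ℝ (Fin d) → ℝ)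
    (hAstar : ∀ p', IsGreatest
      ((fun p : ℝ => min (HL (p', p)) (HR (p', p))) '' Set.uIcc (πL0 p') (πR0 p'))
      (Astar p')) :
    ∀ (p' : EuclideanSpace ℝ (Fin d)) (p lam : ℝ),
      max (max
        (if πR0 p' < πL0 p' then max (max (AL p') (AR p')) (Astar p')
          else max (AL p') (AR p'))
        (if πL0 p' ≤ p then HL (p', p) else AL p'))
        (if p ≤ πR0 p' then HR (p', p) else AR p') ≤ lam →
      min (HL (p', p)) (HR (p', p)) ≤ lam := by
  intro p' p lam h
  have h1 := le_trans (le_max_left _ _) (le_trans (le_max_left _ _) h)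
  have h2 := le_trans (le_max_right _ _) (le_trans (le_max_left _ _) h)
  have h3 := le_trans (le_max_right _ _) h
  by_cases hL : πL0 p' ≤ p
  · rw [if_pos hL] at h2
    exact le_trans (min_le_left _ _) h2
  by_cases hR : p ≤ πR0 p'
  · rw [if_pos hR] at h3
    exact le_trans (min_le_right _ _) h3
  push_neg at hL hR
  have hlt : πR0 p' < πL0 p' := lt_trans hR hL
  rw [if_pos hlt] at h1
  have hmem : p ∈ Set.uIcc (πL0 p') (πR0 p') := by
    rw [Set.uIcc_of_ge hlt.le]
    exact ⟨hR.le, hL.le⟩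
  have := (hAstar p').2 ⟨p, hmem, rfl⟩
  exact le_trans this (le_trans (le_max_right _ _) h1)
end
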